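/- Suppose f : ℕ → Π assigns to each time a process identifier from a finite set Π, defined as 'the process appearing least often in the length-t prefix of a fixed infinite sequence e : ℕ → Π' (ties broken by a fixed linear order on Π). If exactly one process p ∈ Π occurs only finitely often in e, then f(t) = p for all sufficiently large t. -/
import Mathlib


theorem least_often_stabilizes {Proc : Type*} [Fintype Proc] [LinearOrder Proc] [Nonempty Proc]
    (e : ℕ → Proc) (f : ℕ → Proc)
    (count : Proc → ℕ → ℕ)
    (hcount : ∀ p t, count p t = ((Finset.range t).filter fun k => e k = p).card)
    (hfmin : ∀ t, ∀ q : Proc, count (f t) t ≤ count q t)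
    (hftie : ∀ t, ∀ q : Proc, count q t = count (f t) t → f t ≤ q)
    (p : Proc) (hp : {k : ℕ | e k = p}.Finite)
    (hq : ∀ q : Proc, q ≠ p → {k : ℕ | e k = q}.Infinite) :
    ∃ T, ∀ t ≥ T, f t = p := by
  classical
  set N := hp.toFinset.card with hN
  have hcp : ∀ t, count p t ≤ N := by
    intro t
    rw [hcount]
    apply Finset.card_le_card
    intro k hk
    simp only [Finset.mem_filter, Finset.mem_range] at hk
    simp [Set.Finite.mem_toFinset, hk.2]
  have key : ∀ q : Proc, ∃ Tq, ∀ t ≥ Tq, q ≠ p → N < count q t := by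
    intro q
    by_cases hqp : q = p
    · exact ⟨0, fun t _ h => absurd hqp h⟩
    · obtain ⟨F, hFsub, hFcard⟩ := (hq q hqp).exists_subset_card_eq (N + 1)
      refine ⟨F.sup id + 1, fun t ht _ => ?_⟩
      rw [hcount]
      have hFsub' : F ⊆ (Finset.range t).filter fun k => e k = q := by
        intro k hk
        simp only [Finset.mem_filter, Finset.mem_range]
        refine ⟨?_, hFsub hk⟩
        have : k ≤ F.sup id := Finset.le_sup (f := id) hk
        omega
      have := Finset.card_le_card hFsub'
      omega
  choose g hg using key
  refine ⟨Finset.univ.sup g, fun t ht => ?_⟩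
  by_contra hne
  have h1 : N < count (f t) t :=
    hg (f t) t (le_trans (Finset.le_sup (Finset.mem_univ _)) ht) hne
  exact absurd (le_trans (hfmin t p) (hcp t)) (by omega)
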